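/- arXiv:2109.10825 — 2 statements merged into one kernel-verified Lean document; each statement's English description precedes it below -/
import Mathlib

section
/- Let R ⊂ S be an FCP Prüfer extension. Then R is t-closed in S; that is, every b ∈ S such that b² − rb ∈ R and b³ − rb² ∈ R for some r ∈ R belongs to R. -/
/-!
In a Prüfer extension every `R → T`, `T ∈ [R, S]`, is an epimorphism. If `b² − r b ∈ R`,
then `b` is a root of the monic polynomial `X² − r X − (b² − r b)`, so `R[b]` is a finite
`R`-module; a finite epimorphism of commutative rings is surjective, hence `R[b] = R` and
`b ∈ R`.
-/

universe u v

/-- An extension `R ⊆ S` has FCP if every chain of intermediate `R`-subalgebras of `S`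
is finite. -/
def Algebra.HasFCP (R S : Type*) [CommRing R] [CommRing S] [Algebra R S] : Prop :=
  ∀ C : Set (Subalgebra R S), IsChain (· ≤ ·) C → C.Finite

/-- A ring homomorphism is an epimorphism in the category of commutative rings.
(Testing against commutative rings in universe `max u v` suffices, since epimorphy is
detected by the multiplication map `B ⊗[A] B → B`.) -/
def IsRingEpi {A : Type u} {B : Type v} [CommRing A] [CommRing B] (f : A →+* B) : Prop :=
  ∀ (C : Type (max u v)) [CommRing C] (g₁ g₂ : B →+* C), g₁.comp f = g₂.comp f → g₁ = g₂

open TensorProduct Polynomial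

lemma Algebra.IsEpi.of_isRingEpi {A : Type u} {B : Type v} [CommRing A] [CommRing B]
    [Algebra A B] (h : IsRingEpi (algebraMap A B)) : Algebra.IsEpi A B := by
  refine (Algebra.isEpi_iff_forall_one_tmul_eq A B).mpr fun x ↦ ?_
  let e : ULift.{max u v} (B ⊗[A] B) ≃+* B ⊗[A] B := ULift.ringEquiv
  have hcomp := h _ (e.symm.toRingHom.comp Algebra.TensorProduct.includeRight.toRingHom)
    (e.symm.toRingHom.comp Algebra.TensorProduct.includeLeftRingHom) <| by
      ext r
      simp [Algebra.TensorProduct.tmul_one_eq_one_tmul]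
  simpa [e] using congrArg (fun f ↦ e (f x)) hcomp

lemma isIntegral_of_sq_sub_mul_mem_bot {R S : Type*} [CommRing R] [CommRing S] [Algebra R S]
    {b : S} {r : R} (h : b ^ 2 - algebraMap R S r * b ∈ (⊥ : Subalgebra R S)) :
    IsIntegral R b := by
  obtain ⟨s, hs⟩ := Algebra.mem_bot.mp h
  refine ⟨X ^ 2 - (C r * X + C s), monic_X_pow_sub ?_, ?_⟩
  · compute_degree!
  · simp [hs]

lemma mem_bot_of_isIntegral_of_isEpi_adjoin {R S : Type*} [CommRing R] [CommRing S]
    [Algebra R S] {b : S} (hb : IsIntegral R b)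
    (hepi : Algebra.IsEpi R (Algebra.adjoin R {b})) : b ∈ (⊥ : Subalgebra R S) := by
  have : Module.Finite R (Algebra.adjoin R {b}) := Algebra.finite_adjoin_simple_of_isIntegral hb
  obtain ⟨x, hx⟩ := Algebra.isEpi_iff_surjective_algebraMap_of_finite.mp hepi
    ⟨b, Algebra.self_mem_adjoin_singleton R b⟩
  exact Algebra.mem_bot.mpr ⟨x, congrArg Subtype.val hx⟩

theorem stmt4_general {R : Type u} {S : Type v} [CommRing R] [CommRing S] [Algebra R S]
    (hPrufer : ∀ T : Subalgebra R S, Module.Flat R T ∧ IsRingEpi (algebraMap R T)) :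
    ∀ b : S, (∃ r : R, b ^ 2 - algebraMap R S r * b ∈ (⊥ : Subalgebra R S) ∧
        b ^ 3 - algebraMap R S r * b ^ 2 ∈ (⊥ : Subalgebra R S)) →
      b ∈ (⊥ : Subalgebra R S) := by
  rintro b ⟨r, hr2, -⟩
  exact mem_bot_of_isIntegral_of_isEpi_adjoin (isIntegral_of_sq_sub_mul_mem_bot hr2)
    (.of_isRingEpi (hPrufer _).2)

/-- Let `R ⊂ S` be an FCP Prüfer extension.  Then `R` is t-closed in `S`:
every `b ∈ S` such that `b² − rb ∈ R` and `b³ − rb² ∈ R` for some `r ∈ R` belongs to `R`.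
(Here `R` is identified with the bottom subalgebra `⊥` of `S`.) -/
theorem stmt4 {R : Type u} {S : Type v} [CommRing R] [CommRing S] [Algebra R S]
    (hinj : Function.Injective (algebraMap R S))
    (hproper : (⊥ : Subalgebra R S) ≠ ⊤)
    (hFCP : Algebra.HasFCP R S)
    (hPrufer : ∀ T : Subalgebra R S, Module.Flat R T ∧ IsRingEpi (algebraMap R T)) :
    ∀ b : S, (∃ r : R, b ^ 2 - algebraMap R S r * b ∈ (⊥ : Subalgebra R S) ∧
        b ^ 3 - algebraMap R S r * b ^ 2 ∈ (⊥ : Subalgebra R S)) →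
      b ∈ (⊥ : Subalgebra R S) :=
  stmt4_general hPrufer
end

section
/- Let R ⊂ S be an integral FCP extension. The following are equivalent: (1) R is u-closed in S; (2) the map Spec(S) → Spec(R), Q ↦ Q ∩ R, is injective; (3) the seminormalization of R in S equals the t-closure of R in S. -/
section Closures

variable {A B : Type*} [CommRing A] [CommRing B] [Algebra A B]

/-- `T` is seminormal in `B` if every `b ∈ B` with `b², b³ ∈ T` lies in `T`. -/
def IsSeminormalIn (T : Subalgebra A B) : Prop :=
  ∀ b : B, b ^ 2 ∈ T → b ^ 3 ∈ T → b ∈ T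

/-- `T` is t-closed in `B` if every `b ∈ B` with `b² − rb ∈ T` and `b³ − rb² ∈ T` for some
`r ∈ T` lies in `T`. -/
def IsTClosedIn (T : Subalgebra A B) : Prop :=
  ∀ b : B, (∃ r ∈ T, b ^ 2 - r * b ∈ T ∧ b ^ 3 - r * b ^ 2 ∈ T) → b ∈ T

/-- `T` is u-closed in `B` if every `b ∈ B` with `b² − b ∈ T` and `b³ − b² ∈ T` lies in `T`. -/
def IsUClosedIn (T : Subalgebra A B) : Prop :=
  ∀ b : B, b ^ 2 - b ∈ T → b ^ 3 - b ^ 2 ∈ T → b ∈ T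

end Closures

/-!
If two primes `Q₁ ≠ Q₂` of `S` lie over the same prime of `R`, both contain the conductor
`𝔠 = (R : S)`. FCP makes `R / 𝔠` zero-dimensional (Nakayama's lemma on the stabilising chain
`R + aⁿ S`), hence so is the integral extension `S / 𝔠`, whose spectrum is then Hausdorff. An
idempotent of `S / 𝔠` therefore separates `Q₁` from `Q₂`, and a lift `b` has `b² - b ∈ 𝔠 ⊆ R`,
`b³ - b² ∈ 𝔠` but `b ∉ R`. Such a `b` lies in the t-closure, while a subalgebra maximal among
those avoiding `b` is seminormal, so `b` is not in the seminormalization.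

Conversely, let `Spec S → Spec T` be injective and `b² - r b = u`, `b³ - r b² = u b` lie in `T`.
For a prime `p ⊇ (T : b)` with `r ∉ p`, the ring `T[b] = T + T b` has primes over `p` containing
`b` and `b - r`, whose lifts to `S` would be two distinct primes over `p`. So `r` lies in the
radical of `(T : b)`, i.e. `rⁿ b ∈ T`. With `T = R`, `r = 1` this is u-closedness; for `T` the
seminormalization one descends from `rⁿ b` to `b`, so `T` is t-closed.
-/

open Function

section Quadratic

variable {A B : Type*} [CommRing A] [CommRing B] [Algebra A B]

theorem exists_eq_add_mul_of_mem_adjoin_singleton {b : B} {r u : A}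
    (hb : b ^ 2 = algebraMap A B r * b + algebraMap A B u) {x : B}
    (hx : x ∈ Algebra.adjoin A {b}) :
    ∃ t₀ t₁ : A, x = algebraMap A B t₀ + algebraMap A B t₁ * b := by
  induction hx using Algebra.adjoin_induction with
  | mem x hx => exact ⟨0, 1, by rw [Set.mem_singleton_iff.mp hx]; simp⟩
  | algebraMap t => exact ⟨t, 0, by simp⟩
  | add x y _ _ hx hy =>
    obtain ⟨t₀, t₁, rfl⟩ := hx
    obtain ⟨s₀, s₁, rfl⟩ := hy
    exact ⟨t₀ + s₀, t₁ + s₁, by simp only [map_add]; ring⟩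
  | mul x y _ _ hx hy =>
    obtain ⟨t₀, t₁, rfl⟩ := hx
    obtain ⟨s₀, s₁, rfl⟩ := hy
    exact ⟨t₀ * s₀ + t₁ * s₁ * u, t₀ * s₁ + t₁ * s₀ + t₁ * s₁ * r, by
      simp only [map_add, map_mul]
      linear_combination (algebraMap A B t₁ * algebraMap A B s₁) * hb⟩

theorem exists_isPrime_mem_comap_eq [Algebra.IsIntegral A B]
    (hf : Injective (algebraMap A B)) (p : Ideal A) [p.IsPrime] {b : B} {r u : A}
    (hb : b ^ 2 = algebraMap A B r * b + algebraMap A B u) (hu : u ∈ p)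
    (hp : ∀ t a, algebraMap A B t * b = algebraMap A B a → t ∈ p) :
    ∃ Q : Ideal B, Q.IsPrime ∧ b ∈ Q ∧ Q.comap (algebraMap A B) = p := by
  set f := algebraMap A B
  set C := Algebra.adjoin A {b}
  let I : Ideal C :=
    { carrier := {x | ∃ t₀ ∈ p, ∃ t₁, (x : B) = f t₀ + f t₁ * b}
      add_mem' := by
        rintro x y ⟨t₀, ht₀, t₁, hx⟩ ⟨s₀, hs₀, s₁, hy⟩
        exact ⟨t₀ + s₀, p.add_mem ht₀ hs₀, t₁ + s₁, by
          simp only [Subalgebra.coe_add, hx, hy, map_add]; ring⟩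
      zero_mem' := ⟨0, p.zero_mem, 0, by simp⟩
      smul_mem' := by
        rintro c x ⟨t₀, ht₀, t₁, hx⟩
        obtain ⟨s₀, s₁, hc⟩ := exists_eq_add_mul_of_mem_adjoin_singleton hb c.2
        refine ⟨s₀ * t₀ + s₁ * t₁ * u, p.add_mem (p.mul_mem_left _ ht₀)
          (p.mul_mem_left _ hu), s₀ * t₁ + s₁ * t₀ + s₁ * t₁ * r, ?_⟩
        simp only [smul_eq_mul, Subalgebra.coe_mul, hc, hx, map_add, map_mul]
        linear_combination (f s₁ * f t₁) * hb }
  -- an element `t₀ + t₁ b` of `A` with `t₀ ∈ p` lies in `p`, because `(t₁ b)² ∈ t₁ A ⊆ p`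
  have hIp : I.comap (algebraMap A C) ≤ p := by
    rintro w ⟨t₀, ht₀, t₁, hw⟩
    have hw : f t₁ * b = f (w - t₀) := by
      rw [map_sub, show f w = _ from hw]; ring
    have hsq : (w - t₀) ^ 2 = t₁ * (r * (w - t₀) + t₁ * u) := hf <| by
      simp only [map_pow, map_mul, map_add, ← hw]
      linear_combination (f t₁) ^ 2 * hb
    have := (‹p.IsPrime›.mem_of_pow_mem 2 (hsq ▸ p.mul_mem_right _ (hp t₁ _ hw)))
    simpa using p.add_mem this ht₀
  have : Algebra.IsIntegral A C := Algebra.IsIntegral.of_injective C.val Subtype.val_injective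
  obtain ⟨P, hIP, hP, hPp⟩ := Ideal.exists_ideal_over_prime_of_isIntegral p I hIp
  have : Algebra.IsIntegral C B := Algebra.IsIntegral.tower_top A
  obtain ⟨Q, -, hQ, hQP⟩ := Ideal.exists_ideal_over_prime_of_isIntegral P (⊥ : Ideal B) <| by
    rw [← RingHom.ker_eq_comap_bot,
      (RingHom.injective_iff_ker_eq_bot (algebraMap C B)).mp Subtype.val_injective]
    exact bot_le
  refine ⟨Q, hQ, ?_, ?_⟩
  · have hbI : (⟨b, Algebra.self_mem_adjoin_singleton A b⟩ : C) ∈ I := ⟨0, p.zero_mem, 1, by simp⟩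
    simpa [← hQP] using hIP hbI
  · change Q.comap (algebraMap A B) = p
    rw [IsScalarTower.algebraMap_eq A C B, ← Ideal.comap_comap, hQP, hPp]

theorem exists_pow_mul_eq_algebraMap [Algebra.IsIntegral A B]
    (hf : Injective (algebraMap A B)) (hspec : Injective (PrimeSpectrum.comap (algebraMap A B)))
    {b : B} {r u : A} (hb : b ^ 2 = algebraMap A B r * b + algebraMap A B u)
    (hub : ∃ v, algebraMap A B v = algebraMap A B u * b) :
    ∃ n a, algebraMap A B (r ^ n) * b = algebraMap A B a := by
  set f := algebraMap A B
  set J := (1 : Submodule A B).colon {b}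
  have hJ : ∀ {t}, t ∈ J ↔ ∃ a, f t * b = f a := by
    intro t
    simp only [J, Submodule.mem_colon_singleton, Submodule.mem_one, Algebra.smul_def]
    exact exists_congr fun _ => eq_comm
  suffices r ∈ J.radical by
    obtain ⟨n, hn⟩ := this
    exact ⟨n, hJ.mp hn⟩
  rw [Ideal.radical_eq_sInf, Ideal.mem_sInf]
  rintro p ⟨hJp, hp⟩
  by_contra hr
  have hu : u ∈ p := hJp (hJ.mpr (hub.imp fun _ h => h.symm))
  obtain ⟨Q₁, hQ₁, hbQ₁, hQ₁p⟩ :=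
    exists_isPrime_mem_comap_eq hf p hb hu fun t a h => hJp (hJ.mpr ⟨a, h⟩)
  obtain ⟨Q₂, hQ₂, hbQ₂, hQ₂p⟩ := exists_isPrime_mem_comap_eq hf p (r := -r) (b := b - f r)
    (by rw [map_neg]; linear_combination hb) hu fun t a h =>
      hJp (hJ.mpr ⟨a + t * r, by rw [map_add, map_mul, ← h]; ring⟩)
  have hQ : Q₁ = Q₂ := congrArg PrimeSpectrum.asIdeal
    (@hspec ⟨Q₁, hQ₁⟩ ⟨Q₂, hQ₂⟩ (PrimeSpectrum.ext (hQ₁p.trans hQ₂p.symm)))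
  apply hr
  rw [← hQ₁p, Ideal.mem_comap, ← sub_sub_cancel b (f r)]
  exact Q₁.sub_mem hbQ₁ (hQ ▸ hbQ₂)

end Quadratic

namespace Subalgebra

variable {R S : Type*} [CommRing R] [CommRing S] [Algebra R S]

theorem injective_comap_algebraMap (T : Subalgebra R S)
    (h : Injective (PrimeSpectrum.comap (algebraMap R S))) :
    Injective (PrimeSpectrum.comap (algebraMap T S)) := by
  rw [IsScalarTower.algebraMap_eq R T S, PrimeSpectrum.comap_comp] at h
  exact h.of_comp

theorem exists_pow_mul_mem [Algebra.IsIntegral R S] (T : Subalgebra R S)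
    (hT : Injective (PrimeSpectrum.comap (algebraMap T S))) {b r : S} (hr : r ∈ T)
    (h2 : b ^ 2 - r * b ∈ T) (h3 : b ^ 3 - r * b ^ 2 ∈ T) : ∃ n, r ^ n * b ∈ T := by
  have : Algebra.IsIntegral T S := Algebra.IsIntegral.tower_top R
  obtain ⟨n, a, ha⟩ := exists_pow_mul_eq_algebraMap Subtype.val_injective hT
    (r := ⟨r, hr⟩) (u := ⟨_, h2⟩) (b := b) (by simp) ⟨⟨_, h3⟩, by simp; ring⟩
  refine ⟨n, ?_⟩
  rw [show r ^ n * b = a by simpa using ha]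
  exact a.2

end Subalgebra

section Seminormalization

variable {R S : Type*} [CommRing R] [CommRing S] [Algebra R S]

theorem IsTClosedIn.isSeminormalIn {T : Subalgebra R S} (hT : IsTClosedIn T) :
    IsSeminormalIn T :=
  fun b h2 h3 => hT b ⟨0, T.zero_mem, by simpa using h2, by simpa using h3⟩

theorem IsTClosedIn.isUClosedIn {T : Subalgebra R S} (hT : IsTClosedIn T) : IsUClosedIn T :=
  fun b h2 h3 => hT b ⟨1, T.one_mem, by simpa using h2, by simpa using h3⟩

theorem isSeminormalIn_sInf {s : Set (Subalgebra R S)} (hs : ∀ T ∈ s, IsSeminormalIn T) :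
    IsSeminormalIn (sInf s) := by
  intro b h2 h3
  rw [Algebra.mem_sInf] at h2 h3 ⊢
  exact fun T hT => hs T hT b (h2 T hT) (h3 T hT)

theorem IsSeminormalIn.mem_of_pow_mul_mem {T : Subalgebra R S} (hT : IsSeminormalIn T)
    {b r : S} (hr : r ∈ T) (h2 : b ^ 2 - r * b ∈ T) (h3 : b ^ 3 - r * b ^ 2 ∈ T) :
    ∀ n, r ^ n * b ∈ T → b ∈ T := by
  intro n
  induction n with
  | zero => simp
  | succ k ih =>
    -- `c = r ^ k * b` has `c²` and `c³` in `T` as soon as `r c ∈ T`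
    refine fun h => ih (hT _ ?_ ?_)
    · have : (r ^ k * b) ^ 2 = r ^ (2 * k) * (b ^ 2 - r * b) + r ^ k * (r ^ (k + 1) * b) := by
        ring
      rw [this]
      exact T.add_mem (T.mul_mem (T.pow_mem hr _) h2) (T.mul_mem (T.pow_mem hr _) h)
    · have : (r ^ k * b) ^ 3 = r ^ (3 * k) * (b ^ 3 - r * b ^ 2) +
          r ^ (3 * k + 1) * (b ^ 2 - r * b) + r ^ (2 * k + 1) * (r ^ (k + 1) * b) := by
        ring
      rw [this]
      exact T.add_mem (T.add_mem (T.mul_mem (T.pow_mem hr _) h3)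
        (T.mul_mem (T.pow_mem hr _) h2)) (T.mul_mem (T.pow_mem hr _) h)

theorem IsSeminormalIn.isTClosedIn [Algebra.IsIntegral R S] {T : Subalgebra R S}
    (hT : IsSeminormalIn T) (hspec : Injective (PrimeSpectrum.comap (algebraMap T S))) :
    IsTClosedIn T := by
  rintro b ⟨r, hr, h2, h3⟩
  obtain ⟨n, hn⟩ := T.exists_pow_mul_mem hspec hr h2 h3
  exact hT.mem_of_pow_mul_mem hr h2 h3 n hn

theorem isUClosedIn_bot_of_injective_comap [Algebra.IsIntegral R S]
    (hspec : Injective (PrimeSpectrum.comap (algebraMap R S))) :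
    IsUClosedIn (⊥ : Subalgebra R S) := by
  intro b h2 h3
  obtain ⟨n, hn⟩ := (⊥ : Subalgebra R S).exists_pow_mul_mem
    ((⊥ : Subalgebra R S).injective_comap_algebraMap hspec) (one_mem _)
    (by simpa using h2) (by simpa using h3)
  simpa using hn

theorem Subalgebra.exists_le_maximal_notMem {T₀ : Subalgebra R S} {b : S} (hb : b ∉ T₀) :
    ∃ T, T₀ ≤ T ∧ Maximal (fun T : Subalgebra R S => b ∉ T) T :=
  zorn_le_nonempty₀ {T : Subalgebra R S | b ∉ T} (fun c hcb hc y hy => by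
    have : Nonempty c := ⟨⟨y, hy⟩⟩
    refine ⟨⨆ T : c, T.1, ?_, fun T hT => le_iSup (fun T : c => T.1) ⟨T, hT⟩⟩
    change b ∉ (⨆ T : c, T.1)
    rw [← SetLike.mem_coe, Subalgebra.coe_iSup_of_directed hc.directed, Set.mem_iUnion]
    exact fun ⟨T, hT⟩ => hcb T.2 hT) T₀ hb

theorem exists_isSeminormalIn_notMem {T₀ : Subalgebra R S} {b : S} (hb : b ∉ T₀)
    (h2 : b ^ 2 - b ∈ T₀) (h3 : b ^ 3 - b ^ 2 ∈ T₀) :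
    ∃ T, T₀ ≤ T ∧ IsSeminormalIn T ∧ b ∉ T := by
  obtain ⟨T, hT₀T, hbT, hmax⟩ := Subalgebra.exists_le_maximal_notMem hb
  refine ⟨T, hT₀T, fun c hc2 hc3 => ?_, hbT⟩
  by_contra hc
  -- `T[c] = T + T c` is strictly larger than `T`, so by maximality it contains `b`
  obtain ⟨t₀, t₁, hbc⟩ : ∃ t₀ t₁ : T, b = t₀ + t₁ * c := by
    let Tc : Subalgebra R S := (Algebra.adjoin T {c}).restrictScalars R
    have hTTc : T ≤ Tc := fun t ht => Subalgebra.algebraMap_mem (Algebra.adjoin T {c}) (⟨t, ht⟩ : T)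
    have hbTc : b ∈ Tc := by
      by_contra hbTc
      exact hc (hmax hbTc hTTc (Algebra.self_mem_adjoin_singleton T c))
    exact exists_eq_add_mul_of_mem_adjoin_singleton (r := 0) (u := ⟨c ^ 2, hc2⟩) (by simp) hbTc
  have h2 : b ^ 2 - b ∈ T := hT₀T h2
  have h3 : b ^ 3 - b ^ 2 ∈ T := hT₀T h3
  have ht₀ := t₀.2
  have ht₁ := t₁.2
  have hX : (2 * t₀ - 1) * t₁ * c ∈ T := by
    have : (2 * t₀ - 1) * t₁ * c = (b ^ 2 - b) - (t₀ ^ 2 - t₀) - t₁ ^ 2 * c ^ 2 := by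
      rw [hbc]; ring
    rw [this]
    exact sub_mem (sub_mem h2 (sub_mem (pow_mem ht₀ 2) ht₀)) (mul_mem (pow_mem ht₁ 2) hc2)
  have hY : (3 * t₀ ^ 2 - 1) * t₁ * c ∈ T := by
    have : (3 * t₀ ^ 2 - 1) * t₁ * c = (b ^ 3 - b ^ 2) + (b ^ 2 - b) - (t₀ ^ 3 - t₀) -
        3 * t₀ * t₁ ^ 2 * c ^ 2 - t₁ ^ 3 * c ^ 3 := by
      rw [hbc]; ring
    rw [this]
    refine sub_mem (sub_mem (sub_mem (add_mem h3 h2) (sub_mem (pow_mem ht₀ 3) ht₀)) ?_)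
      (mul_mem (pow_mem ht₁ 3) hc3)
    exact mul_mem (mul_mem (mul_mem (T.natCast_mem 3) ht₀) (pow_mem ht₁ 2)) hc2
  -- `(6 t₀ + 3) (2 t₀ - 1) - 4 (3 t₀² - 1) = 1`
  have ht₁c : (t₁ : S) * c ∈ T := by
    have : (t₁ : S) * c = (6 * t₀ + 3) * ((2 * t₀ - 1) * t₁ * c) -
        4 * ((3 * t₀ ^ 2 - 1) * t₁ * c) := by ring
    rw [this]
    exact sub_mem (mul_mem (add_mem (mul_mem (T.natCast_mem 6) ht₀) (T.natCast_mem 3)) hX)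
      (mul_mem (T.natCast_mem 4) hY)
  exact hbT (hbc ▸ add_mem ht₀ ht₁c)

end Seminormalization

section ZeroDimensional

variable {X : Type*} [CommRing X] [Ring.KrullDimLE 0 X]

theorem Ideal.exists_notMem_mul_pow_eq_zero (P : Ideal X) [P.IsPrime] {a : X} (ha : a ∈ P) :
    ∃ s ∉ P, ∃ n, s * a ^ n = 0 := by
  have := Ring.KrullDimLE.of_isLocalization P (Ideal.mem_minimalPrimes_iff_isPrime.mpr ‹_›)
    (Localization.AtPrime P)
  obtain ⟨n, hn⟩ := Ring.KrullDimLE.isNilpotent_iff_mem_maximalIdeal.mpr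
    ((IsLocalization.AtPrime.to_map_mem_maximal_iff (Localization.AtPrime P) P a).mpr ha)
  rw [← map_pow, IsLocalization.map_eq_zero_iff P.primeCompl] at hn
  obtain ⟨⟨s, hs⟩, hs0⟩ := hn
  exact ⟨s, hs, n, hs0⟩

instance PrimeSpectrum.t2Space_of_krullDimLE_zero : T2Space (PrimeSpectrum X) := by
  refine ⟨fun P Q hPQ => ?_⟩
  obtain ⟨a, haP, haQ⟩ := SetLike.not_le_iff_exists.mp fun hle =>
    hPQ (PrimeSpectrum.ext (P.isPrime.isMaximal'.eq_of_le Q.isPrime.ne_top hle))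
  obtain ⟨s, hsP, n, hs⟩ := P.asIdeal.exists_notMem_mul_pow_eq_zero haP
  refine ⟨basicOpen s, basicOpen a, (basicOpen s).isOpen, (basicOpen a).isOpen, hsP, haQ,
    Set.disjoint_left.mpr fun x hsx hax => ?_⟩
  exact (x.isPrime.mem_or_mem (hs ▸ x.asIdeal.zero_mem)).elim hsx
    fun h => hax (x.isPrime.mem_of_pow_mem n h)

theorem PrimeSpectrum.exists_isIdempotentElem_mem_notMem {P Q : PrimeSpectrum X} (h : P ≠ Q) :
    ∃ e, IsIdempotentElem e ∧ e ∈ P.asIdeal ∧ e ∉ Q.asIdeal := by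
  obtain ⟨U, hU, hPU, hQU⟩ := totallySeparatedSpace_iff_exists_isClopen.mp inferInstance h
  obtain ⟨e, he, rfl⟩ := PrimeSpectrum.isClopen_iff_zeroLocus.mp hU
  exact ⟨e, he, by simpa using hPU, by simpa using hQU⟩

end ZeroDimensional

section Conductor

variable {R S : Type*} [CommRing R] [CommRing S] [Algebra R S]

def Subalgebra.conductor (T : Subalgebra R S) : Ideal S where
  carrier := {x | ∀ s, x * s ∈ T}
  add_mem' hx hy s := by rw [add_mul]; exact T.add_mem (hx s) (hy s)
  zero_mem' s := by rw [zero_mul]; exact T.zero_mem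
  smul_mem' c x hx s := by rw [smul_eq_mul, mul_assoc, mul_left_comm]; exact hx (c * s)

theorem Subalgebra.conductor_subset (T : Subalgebra R S) : (T.conductor : Set S) ⊆ T :=
  fun x hx => by simpa using hx 1

theorem Subalgebra.conductor_le_of_forall_mem_iff (T : Subalgebra R S) {Q₁ Q₂ : Ideal S}
    [Q₁.IsPrime] [Q₂.IsPrime] (hT : ∀ y ∈ T, y ∈ Q₁ ↔ y ∈ Q₂) (hne : Q₁ ≠ Q₂) :
    T.conductor ≤ Q₁ := by
  intro x hx
  by_contra hx₁
  have hx₂ : x ∉ Q₂ := (hT x (T.conductor_subset hx)).not.mp hx₁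
  refine hne (Ideal.ext fun s => ?_)
  rw [← Ideal.IsPrime.mul_mem_left_iff hx₁, ← Ideal.IsPrime.mul_mem_left_iff hx₂]
  exact hT _ (hx s)

def Subalgebra.addIdeal (T : Subalgebra R S) (J : Ideal S) : Subalgebra R S :=
  (Subalgebra.toSubmodule T ⊔ J.restrictScalars R).toSubalgebra
    (Submodule.mem_sup_left T.one_mem) fun x y hx hy => by
      obtain ⟨x₁, hx₁, x₂, hx₂, rfl⟩ := Submodule.mem_sup.mp hx
      obtain ⟨y₁, hy₁, y₂, hy₂, rfl⟩ := Submodule.mem_sup.mp hy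
      rw [show (x₁ + x₂) * (y₁ + y₂) = x₁ * y₁ + (x₁ * y₂ + x₂ * (y₁ + y₂)) by ring]
      exact Submodule.add_mem_sup (T.mul_mem hx₁ hy₁)
        (J.add_mem (J.mul_mem_left _ hy₂) (J.mul_mem_right _ hx₂))

theorem Subalgebra.toSubmodule_addIdeal (T : Subalgebra R S) (J : Ideal S) :
    Subalgebra.toSubmodule (T.addIdeal J) = Subalgebra.toSubmodule T ⊔ J.restrictScalars R :=
  rfl

theorem Subalgebra.addIdeal_mono (T : Subalgebra R S) {J J' : Ideal S} (h : J ≤ J') :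
    T.addIdeal J ≤ T.addIdeal J' :=
  Subalgebra.toSubmodule.le_iff_le.mp
    (sup_le_sup_left (show J.restrictScalars R ≤ J'.restrictScalars R from h) _)

end Conductor

namespace Algebra.HasFCP

variable {R S : Type*} [CommRing R] [CommRing S] [Algebra R S]

theorem wellFoundedLT (h : HasFCP R S) : WellFoundedLT (Subalgebra R S) := by
  refine ⟨RelEmbedding.wellFounded_iff_isEmpty.mpr ⟨fun f => ?_⟩⟩
  have hf : StrictAnti f := fun _ _ hmn => f.map_rel_iff.mpr hmn
  exact Set.infinite_range_of_injective f.injective (h _ hf.antitone.isChain_range)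

theorem wellFoundedGT (h : HasFCP R S) : WellFoundedGT (Subalgebra R S) := by
  refine ⟨RelEmbedding.wellFounded_iff_isEmpty.mpr ⟨fun f => ?_⟩⟩
  have hf : StrictMono f := fun _ _ hmn => f.map_rel_iff.mpr hmn
  exact Set.infinite_range_of_injective f.injective (h _ hf.monotone.isChain_range)

theorem finite [Algebra.IsIntegral R S] (h : HasFCP R S) : Module.Finite R S := by
  have := h.wellFoundedGT
  obtain ⟨M, hM, hmax⟩ := wellFounded_gt.has_min {T : Subalgebra R S | T.FG} ⟨⊥, Subalgebra.fg_bot⟩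
  have hM_top : M = ⊤ := Algebra.eq_top_iff.mpr fun x => by
    by_contra hx
    refine hmax (M ⊔ Algebra.adjoin R {x}) (hM.sup (by simpa using Subalgebra.fg_adjoin_finset {x}))
      (lt_of_le_of_ne le_sup_left fun hMx => hx ?_)
    exact hMx ▸ Algebra.mem_sup_right (Algebra.self_mem_adjoin_singleton R x)
  have : Algebra.FiniteType R S := ⟨hM_top ▸ hM⟩
  exact Algebra.IsIntegral.finite

/-- The chain `R + aⁿ S` stabilises, and Nakayama's lemma for `aᵏ (S / R)` then yields
`x ≡ 1 mod a` with `x aᵏ S ⊆ R`. -/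
theorem exists_sub_one_mem_mul_pow_mem_conductor [Module.Finite R S] (h : HasFCP R S) (a : R) :
    ∃ x k, x - 1 ∈ Ideal.span {a} ∧
      algebraMap R S (x * a ^ k) ∈ (⊥ : Subalgebra R S).conductor := by
  set I := Ideal.span {a}
  set B₀ := Subalgebra.toSubmodule (⊥ : Subalgebra R S)
  have := h.wellFoundedLT
  obtain ⟨k, hk⟩ := WellFoundedLT.antitone_chain_condition
    (f := fun n => (⊥ : Subalgebra R S).addIdeal ((I ^ n).map (algebraMap R S)))
    fun m n hmn => Subalgebra.addIdeal_mono _ (Ideal.map_mono (Ideal.pow_le_pow_right hmn))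
  have hle : I ^ k • (⊤ : Submodule R S) ≤ I ^ (k + 1) • ⊤ ⊔ B₀ := by
    have := Subalgebra.toSubmodule.le_iff_le.mpr (hk (k + 1) k.le_succ).le
    simp only [Subalgebra.toSubmodule_addIdeal, ← Ideal.smul_top_eq_map] at this
    exact le_sup_right.trans (this.trans (sup_comm _ _).le)
  have hN : I ^ k • (⊤ : Submodule R (S ⧸ B₀)) ≤ I • I ^ k • ⊤ := by
    rw [← Submodule.mul_smul, ← pow_succ', ← B₀.range_mkQ, ← Submodule.map_top,
      ← Submodule.map_smul'', ← Submodule.map_smul'', LinearMap.map_le_map_iff, B₀.ker_mkQ]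
    exact hle
  obtain ⟨x, hx1, hx⟩ := Submodule.exists_sub_one_mem_and_smul_eq_zero_of_fg_of_le_smul I _
    (.smul (by rw [Ideal.span_singleton_pow]; exact Submodule.fg_span_singleton _)
      Module.Finite.fg_top) hN
  refine ⟨x, k, hx1, fun s => ?_⟩
  have := hx (a ^ k • B₀.mkQ s)
    (Submodule.smul_mem_smul (Ideal.pow_mem_pow (Ideal.mem_span_singleton_self a) k) trivial)
  rw [← map_smul, ← map_smul, Submodule.mkQ_apply, Submodule.Quotient.mk_eq_zero, smul_smul] at this
  simpa [B₀, Algebra.smul_def] using this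

theorem isMaximal_of_comap_conductor_le [Module.Finite R S] (h : HasFCP R S) (p : Ideal R)
    [p.IsPrime] (hp : (⊥ : Subalgebra R S).conductor.comap (algebraMap R S) ≤ p) :
    p.IsMaximal := by
  refine Ideal.isMaximal_iff.mpr ⟨(Ideal.ne_top_iff_one p).mp Ideal.IsPrime.ne_top',
    fun J a hpJ ha haJ => ?_⟩
  obtain ⟨x, k, hx1, hxc⟩ := h.exists_sub_one_mem_mul_pow_mem_conductor a
  have hx : x ∈ p := (Ideal.IsPrime.mem_or_mem ‹_› (hp hxc)).resolve_right
    fun hak => ha (Ideal.IsPrime.mem_of_pow_mem ‹_› k hak)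
  have hx1J : x - 1 ∈ J := (Ideal.span_singleton_le_iff_mem J).mpr haJ hx1
  simpa using J.sub_mem (hpJ hx) hx1J

theorem krullDimLE_zero_quotient_conductor [Algebra.IsIntegral R S] (h : HasFCP R S) :
    Ring.KrullDimLE 0 (S ⧸ (⊥ : Subalgebra R S).conductor) := by
  have := h.finite
  refine Ring.KrullDimLE.mk₀ fun P hP =>
    Ideal.isMaximal_of_isIntegral_of_isMaximal_comap (R := R) P ?_
  refine h.isMaximal_of_comap_conductor_le _ fun r hr => ?_
  rw [Ideal.mem_comap, ← Ideal.Quotient.mk_algebraMap,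
    Ideal.Quotient.eq_zero_iff_mem.mpr (show algebraMap R S r ∈ _ from hr)]
  exact P.zero_mem

theorem exists_sq_sub_mem_conductor_mem_notMem [Algebra.IsIntegral R S] (h : HasFCP R S)
    {Q₁ Q₂ : PrimeSpectrum S} (h₁ : (⊥ : Subalgebra R S).conductor ≤ Q₁.asIdeal)
    (h₂ : (⊥ : Subalgebra R S).conductor ≤ Q₂.asIdeal) (hne : Q₁ ≠ Q₂) :
    ∃ b, b ^ 2 - b ∈ (⊥ : Subalgebra R S).conductor ∧ b ∈ Q₁.asIdeal ∧ b ∉ Q₂.asIdeal := by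
  set 𝔠 := (⊥ : Subalgebra R S).conductor
  have hrange := range_comap_of_surjective _ (Ideal.Quotient.mk 𝔠) Ideal.Quotient.mk_surjective
  rw [Ideal.mk_ker] at hrange
  obtain ⟨P₁, rfl⟩ : Q₁ ∈ Set.range (PrimeSpectrum.comap (Ideal.Quotient.mk 𝔠)) := hrange ▸ h₁
  obtain ⟨P₂, rfl⟩ : Q₂ ∈ Set.range (PrimeSpectrum.comap (Ideal.Quotient.mk 𝔠)) := hrange ▸ h₂
  have := h.krullDimLE_zero_quotient_conductor
  obtain ⟨e, he, he₁, he₂⟩ := PrimeSpectrum.exists_isIdempotentElem_mem_notMem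
    (ne_of_apply_ne _ hne)
  obtain ⟨b, rfl⟩ := Ideal.Quotient.mk_surjective e
  refine ⟨b, ?_, he₁, he₂⟩
  rw [← Ideal.Quotient.eq_zero_iff_mem, map_sub, map_pow, sq, he.eq, sub_self]

theorem injective_comap_of_isUClosedIn [Algebra.IsIntegral R S] (h : HasFCP R S)
    (hU : IsUClosedIn (⊥ : Subalgebra R S)) :
    Injective (PrimeSpectrum.comap (algebraMap R S)) := by
  intro Q₁ Q₂ hQ
  by_contra hne
  set 𝔠 := (⊥ : Subalgebra R S).conductor
  have hbot : ∀ y ∈ (⊥ : Subalgebra R S), y ∈ Q₁.asIdeal ↔ y ∈ Q₂.asIdeal := by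
    rintro _ ⟨r, rfl⟩
    exact SetLike.ext_iff.mp (congrArg PrimeSpectrum.asIdeal hQ) r
  have hne' : Q₁.asIdeal ≠ Q₂.asIdeal := fun h => hne (PrimeSpectrum.ext h)
  obtain ⟨b, hb𝔠, hb₁, hb₂⟩ := h.exists_sq_sub_mem_conductor_mem_notMem
    (Subalgebra.conductor_le_of_forall_mem_iff _ hbot hne')
    (Subalgebra.conductor_le_of_forall_mem_iff _ (fun y hy => (hbot y hy).symm) hne'.symm) hne
  have hb : b ∈ (⊥ : Subalgebra R S) := by
    refine hU b ((⊥ : Subalgebra R S).conductor_subset hb𝔠) ?_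
    rw [show b ^ 3 - b ^ 2 = b * (b ^ 2 - b) by ring]
    exact (⊥ : Subalgebra R S).conductor_subset (𝔠.mul_mem_left b hb𝔠)
  exact hb₂ ((hbot b hb).mp hb₁)

end Algebra.HasFCP

theorem stmt6_general {R S : Type*} [CommRing R] [CommRing S] [Algebra R S]
    (hFCP : Algebra.HasFCP R S)
    (hint : Algebra.IsIntegral R S) :
    (IsUClosedIn (⊥ : Subalgebra R S) ↔
      Function.Injective fun Q : PrimeSpectrum S => PrimeSpectrum.comap (algebraMap R S) Q) ∧
    (IsUClosedIn (⊥ : Subalgebra R S) ↔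
      sInf {T : Subalgebra R S | IsSeminormalIn T} =
        sInf {T : Subalgebra R S | IsTClosedIn T}) := by
  have h12 : IsUClosedIn (⊥ : Subalgebra R S) ↔ Injective (PrimeSpectrum.comap (algebraMap R S)) :=
    ⟨hFCP.injective_comap_of_isUClosedIn, isUClosedIn_bot_of_injective_comap⟩
  refine ⟨h12, fun hU => le_antisymm (sInf_le_sInf fun T hT => hT.isSeminormalIn) (sInf_le ?_),
    fun hsn => ?_⟩
  · exact (isSeminormalIn_sInf fun _ hT => hT).isTClosedIn
      (Subalgebra.injective_comap_algebraMap _ (h12.mp hU))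
  · intro b h2 h3
    by_contra hb
    obtain ⟨T, -, hT, hbT⟩ := exists_isSeminormalIn_notMem hb h2 h3
    refine hbT (sInf_le (s := {T : Subalgebra R S | IsSeminormalIn T}) hT ?_)
    rw [hsn, Algebra.mem_sInf]
    exact fun T' hT' => hT'.isUClosedIn b (bot_le (a := T') h2) (bot_le (a := T') h3)

/-- Let `R ⊂ S` be an integral FCP extension.  The following are
equivalent: (1) `R` is u-closed in `S`; (2) `Spec S → Spec R` is injective; (3) the
seminormalization of `R` in `S` (the smallest seminormal intermediate ring, i.e. the
intersection of all of them) equals the t-closure of `R` in `S`. -/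
theorem stmt6 {R S : Type*} [CommRing R] [CommRing S] [Algebra R S]
    (hinj : Function.Injective (algebraMap R S))
    (hproper : (⊥ : Subalgebra R S) ≠ ⊤)
    (hFCP : Algebra.HasFCP R S)
    (hint : Algebra.IsIntegral R S) :
    (IsUClosedIn (⊥ : Subalgebra R S) ↔
      Function.Injective fun Q : PrimeSpectrum S => PrimeSpectrum.comap (algebraMap R S) Q) ∧
    (IsUClosedIn (⊥ : Subalgebra R S) ↔
      sInf {T : Subalgebra R S | IsSeminormalIn T} =
        sInf {T : Subalgebra R S | IsTClosedIn T}) :=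
  stmt6_general hFCP hint
end
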